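/- arXiv:0706.2449 — 8 statements merged into one kernel-verified Lean document; each statement's English description precedes it below -/
import Mathlib

section
/- For every p ≥ 1 and 0 ≤ k ≤ p, the space of p×p diagonal complex matrices contains a linear subspace of dimension p−k whose non-zero elements all have rank at least k+1. Concretely, the span of the diagonal matrices D_j = diag(1^j, 2^j, …, p^j) for 0 ≤ j < p−k has this property. -/
open Matrix Polynomial

/-- `k`-transitivity for a subspace of matrices (viewed as linear maps). -/
def kTrans {α β : Type*} [Fintype α] [Fintype β]
    (L : Submodule ℂ (Matrix α β ℂ)) (k : ℕ) : Prop :=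
  ∀ x : Fin k → (β → ℂ), LinearIndependent ℂ x →
    ∀ y : Fin k → (α → ℂ), ∃ A ∈ L, ∀ i, A.mulVec (x i) = y i

lemma coeff_aux (n : ℕ) (c : Fin n → ℂ) (j : Fin n) :
    (∑ i : Fin n, Polynomial.C (c i) * Polynomial.X ^ (i : ℕ)).coeff (j : ℕ) = c j := by
  rw [Polynomial.finset_sum_coeff]
  simp only [Polynomial.coeff_C_mul, Polynomial.coeff_X_pow]
  rw [Finset.sum_eq_single j]
  · simp
  · intro b _ hbj
    simp [Fin.val_eq_val, Ne.symm hbj]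
  · simp

lemma sum_smul_diagonal {p n : ℕ} (c : Fin n → ℂ) (v : Fin n → Fin p → ℂ) :
    ∑ j, c j • Matrix.diagonal (v j) = Matrix.diagonal (fun i => ∑ j, c j * v j i) := by
  ext i i'
  rcases eq_or_ne i i' with rfl | h
  · simp [Matrix.sum_apply]
  · simp [Matrix.sum_apply, Matrix.diagonal_apply_ne _ h]

/-- For every `p ≥ 1` and `k ≤ p`, the diagonal matrices in `M_p(ℂ)` contain a
subspace of dimension `p - k` all of whose non-zero elements have rank at least
`k + 1`; concretely, the span of `D j = diag(1^j, …, p^j)` for `0 ≤ j < p - k`. -/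
theorem diag_subspace_high_rank (p k : ℕ) (hp : 1 ≤ p) (hk : k ≤ p) :
    ∀ D : Fin (p - k) → Matrix (Fin p) (Fin p) ℂ,
      (D = fun j : Fin (p - k) => Matrix.diagonal (fun i : Fin p => (((i : ℕ) + 1 : ℂ)) ^ (j : ℕ))) →
      (∀ M ∈ Submodule.span ℂ (Set.range D), M.IsDiag) ∧
      Module.finrank ℂ (Submodule.span ℂ (Set.range D)) = p - k ∧
      (∀ M ∈ Submodule.span ℂ (Set.range D), M ≠ 0 → k + 1 ≤ M.rank) := by
  intro D hD
  have hinj : Function.Injective (fun i : Fin p => ((i : ℕ) + 1 : ℂ)) := by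
    intro a b hab
    simp only at hab
    have : ((a : ℕ) : ℂ) = ((b : ℕ) : ℂ) := by linear_combination hab
    exact Fin.ext (Nat.cast_injective this)
  -- key representation lemma
  have hrep : ∀ c : Fin (p - k) → ℂ, ∑ j, c j • D j =
      Matrix.diagonal (fun i : Fin p =>
        (∑ j : Fin (p - k), Polynomial.C (c j) * Polynomial.X ^ (j : ℕ)).eval ((i : ℕ) + 1)) := by
    intro c
    rw [hD, sum_smul_diagonal]
    congr 1
    ext i
    simp [Polynomial.eval_finset_sum]
  refine ⟨?_, ?_, ?_⟩
  · intro M hM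
    induction hM using Submodule.span_induction with
    | mem x hx =>
      obtain ⟨j, rfl⟩ := hx
      rw [hD]
      exact Matrix.isDiag_diagonal _
    | zero => exact Matrix.isDiag_zero
    | add x y _ _ hx hy => exact hx.add hy
    | smul a x _ hx => exact hx.smul a
  · -- linear independence
    have hv : LinearIndependent ℂ (fun j : Fin (p - k) => fun i : Fin p =>
        (((i : ℕ) + 1 : ℂ)) ^ (j : ℕ)) := by
      rw [Fintype.linearIndependent_iff]
      intro c hc j
      set q : Polynomial ℂ := ∑ i : Fin (p - k), Polynomial.C (c i) * Polynomial.X ^ (i : ℕ) with hq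
      have heval : ∀ i : Fin p, q.eval (((i : ℕ) : ℂ) + 1) = 0 := by
        intro i
        have := congrFun hc i
        simp only [Finset.sum_apply, Pi.smul_apply, smul_eq_mul, Pi.zero_apply] at this
        simpa [hq, Polynomial.eval_finset_sum] using this
      have hdeg : q.natDegree < p := by
        rcases eq_or_ne q 0 with h | h
        · simp [h]; omega
        · have := Polynomial.degree_sum_fin_lt c
          rw [← hq] at this
          have := (Polynomial.natDegree_lt_iff_degree_lt h).2 (this.trans_le (by exact_mod_cast Nat.cast_le.2 (Nat.sub_le p k)))
          simpa using this
      have hq0 : q = 0 :=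
        Polynomial.eq_zero_of_natDegree_lt_card_of_eval_eq_zero q hinj heval (by simpa using hdeg)
      have := coeff_aux (p - k) c j
      rw [← hq, hq0] at this
      simpa using this.symm
    have hDind : LinearIndependent ℂ D := by
      rw [hD]
      exact hv.map' (Matrix.diagonalLinearMap (Fin p) ℂ ℂ)
        (LinearMap.ker_eq_bot.2 Matrix.diagonal_injective)
    rw [finrank_span_eq_card hDind, Fintype.card_fin]
  · intro M hM hM0
    obtain ⟨c, hc⟩ := (Submodule.mem_span_range_iff_exists_fun ℂ).1 hM
    set q : Polynomial ℂ := ∑ i : Fin (p - k), Polynomial.C (c i) * Polynomial.X ^ (i : ℕ) with hq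
    have hMd : M = Matrix.diagonal (fun i : Fin p => q.eval (((i : ℕ) : ℂ) + 1)) := by
      rw [← hc, hrep]
    have hkp : k < p := by
      by_contra h
      have : p - k = 0 := by omega
      apply hM0
      rw [← hc]
      have : IsEmpty (Fin (p - k)) := by rw [this]; exact Fin.isEmpty'
      simp
    have hq0 : q ≠ 0 := by
      intro h
      apply hM0
      rw [hMd, h]
      simp
    have hdeg : q.natDegree ≤ p - k - 1 := by
      have := Polynomial.degree_sum_fin_lt c
      rw [← hq] at this
      have h2 := (Polynomial.natDegree_lt_iff_degree_lt hq0).2 this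
      omega
    -- count zeros
    classical
    set d : Fin p → ℂ := fun i => q.eval (((i : ℕ) : ℂ) + 1) with hd
    have hzero : (Finset.univ.filter (fun i : Fin p => d i = 0)).card ≤ p - k - 1 := by
      have hsub : ∀ i ∈ Finset.univ.filter (fun i : Fin p => d i = 0),
          ((i : ℕ) + 1 : ℂ) ∈ q.roots.toFinset := by
        intro i hi
        rw [Finset.mem_filter] at hi
        rw [Multiset.mem_toFinset, Polynomial.mem_roots hq0]
        exact hi.2
      calc (Finset.univ.filter (fun i : Fin p => d i = 0)).card
          ≤ q.roots.toFinset.card :=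
            Finset.card_le_card_of_injOn _ hsub (fun a _ b _ h => hinj h)
        _ ≤ Multiset.card q.roots := Multiset.toFinset_card_le _
        _ ≤ q.natDegree := Polynomial.card_roots' q
        _ ≤ p - k - 1 := hdeg
    have hcard : Fintype.card {i : Fin p // d i ≠ 0} =
        (Finset.univ.filter (fun i : Fin p => d i ≠ 0)).card := Fintype.card_subtype _
    have hsplit := Finset.card_filter_add_card_filter_not
      (s := (Finset.univ : Finset (Fin p))) (p := fun i : Fin p => d i = 0)
    simp only [Finset.card_univ, Fintype.card_fin] at hsplit
    rw [hMd, Matrix.rank_diagonal, hcard]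
    have : (Finset.univ.filter (fun i : Fin p => ¬ d i = 0)).card
        = (Finset.univ.filter (fun i : Fin p => d i ≠ 0)).card := rfl
    omega
end

section
/- The space of n×n complex Toeplitz matrices is a transitive subspace of M_n(ℂ) of dimension 2n−1: for every non-zero x ∈ ℂ^n and every y ∈ ℂ^n there exists a Toeplitz matrix T with T x = y. -/
open Matrix

/-- extend a vector by zero to ℤ -/
noncomputable def zext (n : ℕ) (x : Fin n → ℂ) (m : ℤ) : ℂ :=
  if h : 0 ≤ m ∧ m < n then x ⟨m.toNat, by omega⟩ else 0

lemma zext_coe (n : ℕ) (x : Fin n → ℂ) (j : Fin n) : zext n x (j : ℤ) = x j := by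
  have hj := j.isLt
  rw [zext, dif_pos ⟨by positivity, by exact_mod_cast hj⟩]
  exact congrArg x (Fin.ext (by simp))

lemma zext_zero (n : ℕ) (x : Fin n → ℂ) (m : ℤ) (h : m < 0 ∨ (n : ℤ) ≤ m) :
    zext n x m = 0 := by
  rw [zext, dif_neg (by omega)]

/-- convolution symmetry -/
lemma conv_symm (n : ℕ) (f g : ℤ → ℂ)
    (hf : ∀ m : ℤ, m < 0 ∨ (n : ℤ) ≤ m → f m = 0)
    (hg : ∀ m : ℤ, m < 0 ∨ (n : ℤ) ≤ m → g m = 0)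
    (c : ℤ) (hc : 0 ≤ c) :
    ∑ j : Fin n, f (c - j) * g j = ∑ k : Fin n, g (c - k) * f k := by
  have key : ∀ F G : ℤ → ℂ, (∀ m : ℤ, m < 0 ∨ (n : ℤ) ≤ m → F m = 0) →
      (∀ m : ℤ, m < 0 ∨ (n : ℤ) ≤ m → G m = 0) →
      ∑ j : Fin n, F (c - j) * G j = ∑ m ∈ Finset.Icc 0 c, F (c - m) * G m := by
    intro F G hF hG
    have e : (Finset.range n).map ⟨(Nat.cast : ℕ → ℤ), Nat.cast_injective⟩ ⊆
        Finset.Icc (0 : ℤ) (c + n) := by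
      intro m hm
      simp only [Finset.mem_map, Finset.mem_range, Function.Embedding.coeFn_mk] at hm
      obtain ⟨a, ha, rfl⟩ := hm
      simp only [Finset.mem_Icc]
      omega
    have h1 : ∑ j : Fin n, F (c - j) * G j
        = ∑ m ∈ (Finset.range n).map ⟨(Nat.cast : ℕ → ℤ), Nat.cast_injective⟩,
            F (c - m) * G m := by
      rw [Finset.sum_map]
      rw [Fin.sum_univ_eq_sum_range (fun j => F (c - j) * G j)]
      simp
    rw [h1, Finset.sum_subset e ?side1]
    case side1 =>
      intro m hm hm'
      simp only [Finset.mem_map, Finset.mem_range, Function.Embedding.coeFn_mk] at hm'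
      simp only [Finset.mem_Icc] at hm
      push_neg at hm'
      rw [hG m, mul_zero]
      rcases lt_or_ge m 0 with h | h
      · exact Or.inl h
      · right
        have := hm' m.toNat
        omega
    rw [← Finset.sum_subset (Finset.Icc_subset_Icc_right (by omega : c ≤ c + n)) ?side2]
    case side2 =>
      intro m hm hm'
      simp only [Finset.mem_Icc] at hm hm'
      rw [hF (c - m) (Or.inl (by omega)), zero_mul]
  rw [key f g hf hg, key g f hg hf]
  refine Finset.sum_nbij' (fun m => c - m) (fun m => c - m) ?_ ?_ ?_ ?_ ?_ <;>
    intro m hm <;> simp only [Finset.mem_Icc] at hm ⊢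
  · omega
  · omega
  · omega
  · omega
  · rw [sub_sub_cancel]
    ring

/-- A matrix is Toeplitz if its entries depend only on `i - j`. -/
def IsToeplitz {n : ℕ} (M : Matrix (Fin n) (Fin n) ℂ) : Prop :=
  ∀ i j i' j' : Fin n, (i : ℤ) - (j : ℤ) = (i' : ℤ) - (j' : ℤ) → M i j = M i' j'

/-- diagonal index -/
def tidx {n : ℕ} (i j : Fin n) : Fin (2 * n - 1) :=
  ⟨((i : ℤ) - (j : ℤ) + (n - 1)).toNat, by
    have hi := i.isLt; have hj := j.isLt; omega⟩

/-- a pair of indices realizing a given diagonal -/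
def tpick {n : ℕ} (d : Fin (2 * n - 1)) : Fin n × Fin n :=
  if h : n - 1 ≤ (d : ℕ) then
    (⟨(d : ℕ) - (n - 1), by have := d.isLt; omega⟩, ⟨0, by have := d.isLt; omega⟩)
  else
    (⟨0, by have := d.isLt; omega⟩, ⟨n - 1 - (d : ℕ), by have := d.isLt; omega⟩)

lemma tpick_diff {n : ℕ} (d : Fin (2 * n - 1)) :
    ((tpick d).1 : ℤ) - ((tpick d).2 : ℤ) = (d : ℤ) - ((n : ℤ) - 1) := by
  have hd := d.isLt
  rw [tpick]
  split <;> simp <;> omega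

lemma tidx_tpick {n : ℕ} (d : Fin (2 * n - 1)) : tidx (tpick d).1 (tpick d).2 = d := by
  have hd := d.isLt
  have h := tpick_diff d
  apply Fin.ext
  simp only [tidx]
  omega

/-- parameterization of Toeplitz matrices -/
noncomputable def toepMap (n : ℕ) :
    (Fin (2 * n - 1) → ℂ) →ₗ[ℂ] Matrix (Fin n) (Fin n) ℂ where
  toFun a := fun i j => a (tidx i j)
  map_add' a b := by ext i j; simp; rfl
  map_smul' c a := by ext i j; simp; rfl

lemma toepMap_injective (n : ℕ) : Function.Injective (toepMap n) := by
  intro a b hab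
  funext d
  have := congrFun (congrFun hab (tpick d).1) (tpick d).2
  change a (tidx (tpick d).1 (tpick d).2) = b (tidx (tpick d).1 (tpick d).2) at this
  simpa [toepMap, tidx_tpick] using this

lemma toepMap_range (n : ℕ) :
    (LinearMap.range (toepMap n) : Set (Matrix (Fin n) (Fin n) ℂ))
      = {M | IsToeplitz M} := by
  ext M
  constructor
  · rintro ⟨a, rfl⟩
    intro i j i' j' h
    have : tidx i j = tidx i' j' := by
      apply Fin.ext; simp only [tidx]; omega
    show a (tidx i j) = a (tidx i' j'); rw [this]
  · intro hM
    refine ⟨fun d => M (tpick d).1 (tpick d).2, ?_⟩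
    funext i j
    simp only [toepMap, LinearMap.coe_mk, AddHom.coe_mk]
    apply hM
    rw [tpick_diff (tidx i j)]
    have hi := i.isLt; have hj := j.isLt
    simp only [tidx]
    omega

lemma toeplitz_dim_part (n : ℕ) :
    Module.finrank ℂ (Submodule.span ℂ {M : Matrix (Fin n) (Fin n) ℂ | IsToeplitz M})
      = 2 * n - 1 := by
  rw [← toepMap_range n, Submodule.span_eq]
  rw [LinearMap.finrank_range_of_inj (toepMap_injective n)]
  simp

lemma toeplitz_trans_part (n : ℕ) (x : Fin n → ℂ) (hx : x ≠ 0) (y : Fin n → ℂ) :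
    ∃ T : Matrix (Fin n) (Fin n) ℂ, IsToeplitz T ∧ T.mulVec x = y := by
  -- minimal index with x l ≠ 0
  have hne : (Finset.univ.filter (fun j => x j ≠ 0)).Nonempty := by
    obtain ⟨j, hj⟩ := Function.ne_iff.mp hx
    exact ⟨j, by simpa using hj⟩
  set l := (Finset.univ.filter (fun j => x j ≠ 0)).min' hne with hl
  have hxl : x l ≠ 0 := by
    have := (Finset.univ.filter (fun j => x j ≠ 0)).min'_mem hne
    simpa using this
  have hmin : ∀ m : ℤ, m < (l : ℤ) → zext n x m = 0 := by
    intro m hm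
    rcases lt_or_ge m 0 with h | h
    · exact zext_zero n x m (Or.inl h)
    · have hmn : m < (n : ℤ) := by have := l.isLt; omega
      have hj : m.toNat < n := by omega
      rw [zext, dif_pos ⟨h, hmn⟩]
      by_contra hne'
      have : l ≤ (⟨m.toNat, by omega⟩ : Fin n) :=
        Finset.min'_le _ _ (by simp [hne'])
      rw [Fin.le_def] at this
      simp only at this
      omega
  -- the lower-triangular matrix C
  set C : Matrix (Fin n) (Fin n) ℂ := fun i k => zext n x ((i : ℤ) + l - k) with hC
  have htri : C.BlockTriangular OrderDual.toDual := by
    intro i j hij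
    have : (i : ℕ) < (j : ℕ) := hij
    exact hmin _ (by omega)
  have hdiag : ∀ i : Fin n, C i i = x l := by
    intro i
    have : (i : ℤ) + l - i = (l : ℤ) := by ring
    rw [hC]; simp only [this]; exact zext_coe n x l
  have hdet : IsUnit C.det := by
    rw [Matrix.det_of_lowerTriangular C htri]
    simp only [hdiag]
    simp [Finset.prod_const, hxl]
  have hsurj : Function.Surjective C.mulVec :=
    Matrix.mulVec_surjective_iff_isUnit.mpr ((Matrix.isUnit_iff_isUnit_det C).mpr hdet)
  obtain ⟨b, hb⟩ := hsurj y
  refine ⟨fun i j => zext n b ((i : ℤ) - j + l), ?_, ?_⟩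
  · intro i j i' j' h
    dsimp only; rw [h]
  · funext i
    rw [← hb]
    simp only [Matrix.mulVec, dotProduct]
    have hcalc : ∀ j : Fin n, zext n b ((i : ℤ) - j + l) * x j
        = zext n b (((i : ℤ) + l) - j) * zext n x j := by
      intro j
      rw [zext_coe]
      congr 2
      ring
    rw [Finset.sum_congr rfl (fun j _ => hcalc j)]
    rw [conv_symm n (zext n b) (zext n x) (fun m hm => zext_zero n b m hm)
      (fun m hm => zext_zero n x m hm) ((i : ℤ) + l) (by positivity)]
    apply Finset.sum_congr rfl
    intro k _
    rw [zext_coe, hC]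

/-- The `n × n` Toeplitz matrices form a transitive subspace of `M_n(ℂ)` of
dimension `2n - 1`. -/
theorem toeplitz_transitive (n : ℕ) (hn : 1 ≤ n) :
    Module.finrank ℂ (Submodule.span ℂ {M : Matrix (Fin n) (Fin n) ℂ | IsToeplitz M})
      = 2 * n - 1 ∧
    (∀ x : Fin n → ℂ, x ≠ 0 → ∀ y : Fin n → ℂ,
      ∃ T : Matrix (Fin n) (Fin n) ℂ, IsToeplitz T ∧ T.mulVec x = y) := by
  exact ⟨toeplitz_dim_part n, fun x hx y => toeplitz_trans_part n x hx y⟩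
end

section
/- If L ⊆ M_l(ℂ) is a transitive subspace which is spanned by its rank-one elements, then the span of all products AB with A, B ∈ L equals M_l(ℂ). -/
/-!
Let `W` be the set of vectors `w` such that `u wᵀ ∈ L` for some `u ≠ 0`. For `w ∈ W` and any `y`,
transitivity gives `B ∈ L` with `B u = y`, so `y wᵀ = B (u wᵀ) ∈ L²`. A vector `x` orthogonal to
`W` is annihilated by every rank-one element `u wᵀ` of `L`, hence by all of `L`, and transitivity
forces `x = 0`; so `W` spans `Kⁿ`, the matrices `y wᵀ` lie in `span L²`, and they span all matrices.
-/

open Matrix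

namespace Matrix

variable {K m n : Type*}

theorem exists_vecMulVec_of_rank_eq_one [Field K] [Fintype n] [DecidableEq n]
    {A : Matrix m n K} (h : A.rank = 1) : ∃ u w, u ≠ 0 ∧ A = vecMulVec u w := by
  obtain ⟨v, hv0, hv⟩ := finrank_eq_one_iff'.mp h
  choose c hc using fun j => hv ⟨A *ᵥ Pi.single j 1, Pi.single j 1, rfl⟩
  refine ⟨v, c, fun h0 => hv0 (Subtype.ext h0), ?_⟩
  ext i j
  have hcol := congrFun (congrArg Subtype.val (hc j)) i
  simp only [SetLike.val_smul, Pi.smul_apply, mulVec_single_one, col_apply, smul_eq_mul] at hcol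
  rw [vecMulVec_apply, ← hcol, mul_comm]

end Matrix

namespace Submodule

theorem eq_top_of_vecMulVec_mem {R m n : Type*} [CommSemiring R] [Fintype m] [Fintype n]
    [DecidableEq m] [DecidableEq n] (S : Submodule R (Matrix m n R))
    (h : ∀ u w, vecMulVec u w ∈ S) : S = ⊤ := by
  refine eq_top_iff'.2 fun M => ?_
  rw [matrix_eq_sum_single M]
  refine sum_mem fun i _ => sum_mem fun j _ => ?_
  have hsingle := S.smul_mem (M i j) (h (Pi.single i 1) (Pi.single j 1))
  rwa [← single_eq_single_vecMulVec_single, smul_single, smul_eq_mul, mul_one] at hsingle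

variable {K n : Type*} [Field K] [Fintype n] [DecidableEq n]

theorem eq_top_of_forall_dotProduct_eq_zero (p : Submodule K (n → K))
    (h : ∀ x, (∀ w ∈ p, w ⬝ᵥ x = 0) → x = 0) : p = ⊤ := by
  by_contra hp
  obtain ⟨f, hf0, hf⟩ := exists_dual_map_eq_bot_of_lt_top (lt_top_iff_ne_top.2 hp) inferInstance
  set x := (dotProductEquiv K n).symm f
  have hfx : ∀ w, f w = x ⬝ᵥ w := fun w => by
    rw [← dotProductEquiv_apply_apply, LinearEquiv.apply_symm_apply]
  refine hf0 ?_
  have hx0 : x = 0 := h x fun w hw => by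
    rw [dotProduct_comm, ← hfx]
    exact (Submodule.eq_bot_iff _).1 hf _ ⟨w, hw, rfl⟩
  ext w
  simp [hfx, hx0]

variable (L : Submodule K (Matrix n n K))

def IsTransitive : Prop :=
  ∀ x : n → K, x ≠ 0 → ∀ y : n → K, ∃ A ∈ L, A *ᵥ x = y

def rankOneRightFactors : Set (n → K) :=
  {w | ∃ u ≠ 0, vecMulVec u w ∈ L}

variable {L}

theorem vecMulVec_mem_mul_self (hL : L.IsTransitive) (y : n → K) {w : n → K}
    (hw : w ∈ span K L.rankOneRightFactors) : vecMulVec y w ∈ L * L := by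
  refine span_le (p := (L * L).comap (vecMulVecBilin K K y)).2 ?_ hw
  rintro w ⟨u, hu, huw⟩
  obtain ⟨B, hB, rfl⟩ := hL u hu y
  simpa [mul_vecMulVec] using mul_mem_mul hB huw

theorem span_rankOneRightFactors_eq_top (hL : L.IsTransitive)
    (hspan : L ≤ span K {A | A ∈ L ∧ A.rank = 1}) : span K L.rankOneRightFactors = ⊤ := by
  refine eq_top_of_forall_dotProduct_eq_zero _ fun x hx => ?_
  have hkill : L ≤ LinearMap.ker ((mulVecBilin K K).flip x) := by
    refine hspan.trans (span_le.2 ?_)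
    rintro A ⟨hAL, hA⟩
    obtain ⟨u, w, hu, rfl⟩ := exists_vecMulVec_of_rank_eq_one hA
    simp [vecMulVec_mulVec, hx w (subset_span ⟨u, hu, hAL⟩)]
  by_contra hx0
  obtain ⟨A, hA, hAx⟩ := hL x hx0 x
  exact hx0 (hAx ▸ hkill hA)

theorem mul_self_eq_top (hL : L.IsTransitive)
    (hspan : L ≤ span K {A | A ∈ L ∧ A.rank = 1}) : L * L = ⊤ :=
  eq_top_of_vecMulVec_mem _ fun y _ =>
    vecMulVec_mem_mul_self hL y (span_rankOneRightFactors_eq_top hL hspan ▸ mem_top)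

end Submodule

/-- If `L ⊆ M_l(ℂ)` is transitive and spanned by its rank-one elements, then the
span of products of two elements of `L` is all of `M_l(ℂ)`. -/
theorem span_sq_eq_top (l : ℕ)
    (L : Submodule ℂ (Matrix (Fin l) (Fin l) ℂ))
    (htrans : ∀ x : Fin l → ℂ, x ≠ 0 → ∀ y : Fin l → ℂ, ∃ A ∈ L, A.mulVec x = y)
    (hspan : L = Submodule.span ℂ {A : Matrix (Fin l) (Fin l) ℂ | A ∈ L ∧ A.rank = 1}) :
    Submodule.span ℂ {C : Matrix (Fin l) (Fin l) ℂ | ∃ A ∈ L, ∃ B ∈ L, C = A * B} = ⊤ := by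
  rw [eq_top_iff, ← Submodule.mul_self_eq_top htrans hspan.le]
  exact Submodule.mul_le.2 fun A hA B hB => Submodule.subset_span ⟨A, hA, B, hB, rfl⟩
end

section
/- Let L₁, L₂ ⊆ M_n(ℂ) be subspaces with L₁ transitive and L₂ k-separating. Then span L₁L₂ = span{ AB : A ∈ L₁, B ∈ L₂ } is k-transitive. -/
open Matrix

/-- `k`-separating: for every linearly independent `x_1, …, x_k` there is an
element of the space vanishing on `x_1, …, x_{k-1}` and non-zero on `x_k`. -/
def kSep {α β : Type*} [Fintype α] [Fintype β]
    (L : Submodule ℂ (Matrix α β ℂ)) (k : ℕ) : Prop :=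
  ∀ x : Fin k → (β → ℂ), LinearIndependent ℂ x →
    ∃ A ∈ L, (∀ i : Fin k, (i : ℕ) + 1 < k → A.mulVec (x i) = 0) ∧
      (∀ i : Fin k, (i : ℕ) + 1 = k → A.mulVec (x i) ≠ 0)

/-- If `L₁` is transitive and `L₂` is `k`-separating, then `span L₁ L₂` is
`k`-transitive. -/
theorem span_prod_k_transitive (n k : ℕ)
    (L₁ L₂ : Submodule ℂ (Matrix (Fin n) (Fin n) ℂ))
    (h₁ : ∀ x : Fin n → ℂ, x ≠ 0 → ∀ y : Fin n → ℂ, ∃ A ∈ L₁, A.mulVec x = y)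
    (h₂ : kSep L₂ k) :
    kTrans (Submodule.span ℂ
      {C : Matrix (Fin n) (Fin n) ℂ | ∃ A ∈ L₁, ∃ B ∈ L₂, C = A * B}) k := by
  intro x hx y
  rcases Nat.eq_zero_or_pos k with hk | hk
  · subst hk
    exact ⟨0, Submodule.zero_mem _, fun i => i.elim0⟩
  have key : ∀ j : Fin k, ∃ A ∈ L₁, ∃ B ∈ L₂,
      (A * B).mulVec (x j) = y j ∧
      ∀ m : Fin k, m ≠ j → (A * B).mulVec (x m) = 0 := by
    intro j
    set last : Fin k := ⟨k - 1, by omega⟩ with hlast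
    set σ := Equiv.swap j last with hσ
    have hx' : LinearIndependent ℂ (x ∘ σ) := hx.comp σ σ.injective
    obtain ⟨B, hBL, hB0, hBne⟩ := h₂ (x ∘ σ) hx'
    have hBj : B.mulVec (x j) ≠ 0 := by
      have h := hBne last (by simp [hlast]; omega)
      simpa [hσ, Equiv.swap_apply_right] using h
    obtain ⟨A, hAL, hA⟩ := h₁ _ hBj (y j)
    refine ⟨A, hAL, B, hBL, ?_, ?_⟩
    · rw [← Matrix.mulVec_mulVec, hA]
    · intro m hm
      have hne : σ.symm m ≠ last := by
        rw [hσ, Equiv.symm_swap]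
        rcases eq_or_ne m last with h | h
        · subst h
          rw [Equiv.swap_apply_right]
          exact fun hj => hm hj.symm
        · rw [Equiv.swap_apply_of_ne_of_ne hm h]
          exact h
      have hval : ((σ.symm m : Fin k) : ℕ) + 1 < k := by
        have h1 := (σ.symm m).isLt
        have h2 : ((σ.symm m : Fin k) : ℕ) ≠ k - 1 := fun h => hne (Fin.ext h)
        omega
      have hBm : B.mulVec (x m) = 0 := by
        have h := hB0 (σ.symm m) hval
        simpa using h
      rw [← Matrix.mulVec_mulVec, hBm, Matrix.mulVec_zero]
  choose A hA1 B hB1 hEq hZero using key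
  refine ⟨∑ j, A j * B j, ?_, ?_⟩
  · exact Submodule.sum_mem _ fun j _ =>
      Submodule.subset_span ⟨A j, hA1 j, B j, hB1 j, rfl⟩
  · intro i
    rw [show (∑ j, A j * B j).mulVec (x i)
        = ∑ j, (A j * B j).mulVec (x i) from
      map_sum (Matrix.mulVec.addMonoidHomLeft (x i)) _ _]
    rw [Finset.sum_eq_single i (fun j _ hj => hZero j i (Ne.symm hj)) (by simp)]
    exact hEq i
end

section
/- For 1 ≤ k < min(m,n), every k-transitive subspace L of M_{m,n}(ℂ) is (k+1)-separating: for every linearly independent x_1,…,x_{k+1} ∈ ℂ^n there exists L ∈ L with L x_i = 0 for 1 ≤ i ≤ k and L x_{k+1} ≠ 0. -/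
open Matrix

lemma li_mix {V : Type*} [AddCommGroup V] [Module ℂ V] {k : ℕ} (hk : 1 ≤ k)
    (x : Fin (k + 1) → V) (hx : LinearIndependent ℂ x) (a b : ℂ)
    (hab : a ≠ 0 ∨ b ≠ 0) :
    LinearIndependent ℂ (fun i : Fin k =>
      if (i : ℕ) + 1 = k then a • x ⟨k - 1, by omega⟩ + b • x (Fin.last k)
      else x (Fin.castSucc i)) := by
  rw [Fintype.linearIndependent_iff] at hx ⊢
  intro g hg
  set g' : Fin (k + 1) → ℂ := fun j =>
    if h : (j : ℕ) + 1 < k then g ⟨j, by omega⟩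
    else if (j : ℕ) = k - 1 then a * g ⟨k - 1, by omega⟩
    else b * g ⟨k - 1, by omega⟩ with hg'
  have hlast : g' (Fin.last k) = b * g ⟨k - 1, by omega⟩ := by
    simp only [hg', Fin.val_last]
    rw [dif_neg (by omega), if_neg (by omega)]
  have h1 : ∀ i : Fin k, g i • (if (i : ℕ) + 1 = k
        then a • x ⟨k - 1, by omega⟩ + b • x (Fin.last k)
        else x (Fin.castSucc i))
      = g' (Fin.castSucc i) • x (Fin.castSucc i)
        + (if (i : ℕ) + 1 = k then (b * g i) • x (Fin.last k) else 0) := by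
    intro i
    by_cases hi : (i : ℕ) + 1 = k
    · have hiv : (i : ℕ) = k - 1 := by omega
      have hEq : (⟨k - 1, by omega⟩ : Fin (k + 1)) = Fin.castSucc i := by
        ext; simp [hiv]
      have hgi : g (⟨k - 1, by omega⟩ : Fin k) = g i := by congr 1; ext; simp [hiv]
      have hgc : g' (Fin.castSucc i) = a * g i := by
        simp only [hg', Fin.coe_castSucc]
        rw [dif_neg (by omega), if_pos hiv, hgi]
      rw [if_pos hi, if_pos hi, hgc, hEq, smul_add, smul_smul, smul_smul,
        mul_comm (g i) a, mul_comm (g i) b]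
    · have hgc : g' (Fin.castSucc i) = g i := by
        simp only [hg', Fin.coe_castSucc]
        rw [dif_pos (by have := i.isLt; omega)]
      rw [if_neg hi, if_neg hi, hgc, add_zero]
  have hsum2 : ∑ i : Fin k,
      (if (i : ℕ) + 1 = k then (b * g i) • x (Fin.last k) else 0)
      = g' (Fin.last k) • x (Fin.last k) := by
    rw [Finset.sum_eq_single (⟨k - 1, by omega⟩ : Fin k)]
    · rw [if_pos (by simp; omega), hlast]
    · intro i _ hne
      rw [if_neg]
      intro h; exact hne (by ext; simp; omega)
    · simp
  have key : ∀ j, g' j = 0 := by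
    apply hx
    rw [Fin.sum_univ_castSucc, ← hsum2, ← Finset.sum_add_distrib]
    exact (Finset.sum_congr rfl fun i _ => (h1 i).symm).trans hg
  have hbg : b * g ⟨k - 1, by omega⟩ = 0 := hlast ▸ key (Fin.last k)
  have hag : a * g (⟨k - 1, by omega⟩ : Fin k) = 0 := by
    have := key ⟨k - 1, by omega⟩
    simp only [hg'] at this
    rw [dif_neg (by omega)] at this
    simpa using this
  have hgk : g (⟨k - 1, by omega⟩ : Fin k) = 0 := by
    rcases hab with h | h
    · rcases mul_eq_zero.mp hag with h' | h'
      · exact absurd h' h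
      · exact h'
    · rcases mul_eq_zero.mp hbg with h' | h'
      · exact absurd h' h
      · exact h'
  intro i
  by_cases hi : (i : ℕ) + 1 = k
  · have : i = ⟨k - 1, by omega⟩ := by ext; show (i : ℕ) = k - 1; omega
    rw [this]; exact hgk
  · have := key ⟨i, by omega⟩
    simp only [hg'] at this
    rw [dif_pos (by show (i : ℕ) + 1 < k; have := i.isLt; omega)] at this
    simpa using this

/-- For `1 ≤ k < min(m,n)`, every `k`-transitive subspace of `M_{m,n}(ℂ)` is
`(k+1)`-separating. -/
theorem k_transitive_is_succ_separating (m n k : ℕ) (hk : 1 ≤ k)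
    (hm : k < m) (hn : k < n)
    (L : Submodule ℂ (Matrix (Fin m) (Fin n) ℂ)) (hL : kTrans L k) :
    kSep L (k + 1) := by
  intro x hx
  by_contra hcon
  push_neg at hcon
  have hkill : ∀ A ∈ L, (∀ i : Fin (k + 1), (i : ℕ) < k → A.mulVec (x i) = 0) →
      A.mulVec (x (Fin.last k)) = 0 := by
    intro A hA h
    obtain ⟨i, hi1, hi2⟩ := hcon A hA (fun i hi => h i (by omega))
    have : i = Fin.last k := by ext; show (i : ℕ) = k; omega
    rwa [this] at hi2
  have hEx : ∀ a b : ℂ, a ≠ 0 ∨ b ≠ 0 → ∀ w : Fin m → ℂ, ∃ A ∈ L,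
      (∀ i : Fin (k + 1), (i : ℕ) + 1 < k → A.mulVec (x i) = 0) ∧
      a • A.mulVec (x ⟨k - 1, by omega⟩) + b • A.mulVec (x (Fin.last k)) = w := by
    intro a b hab w
    obtain ⟨A, hAL, hA⟩ := hL _ (li_mix hk x hx a b hab)
      (fun i => if (i : ℕ) + 1 = k then w else 0)
    refine ⟨A, hAL, ?_, ?_⟩
    · intro i hi
      have hlt : (i : ℕ) < k := by omega
      have h := hA ⟨(i : ℕ), hlt⟩
      have hcond : ¬(((⟨(i : ℕ), hlt⟩ : Fin k) : ℕ) + 1 = k) := by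
        show ¬((i : ℕ) + 1 = k); omega
      rw [if_neg hcond, if_neg hcond] at h
      have hcs : Fin.castSucc (⟨(i : ℕ), hlt⟩ : Fin k) = i := by ext; simp
      rwa [hcs] at h
    · have h := hA ⟨k - 1, by omega⟩
      have hcond : (((⟨k - 1, by omega⟩ : Fin k) : ℕ) + 1 = k) := by
        show k - 1 + 1 = k; omega
      rw [if_pos hcond, if_pos hcond] at h
      rwa [Matrix.mulVec_add, Matrix.mulVec_smul, Matrix.mulVec_smul] at h
  have hS0 : ∀ z : Fin m → ℂ, ∃ A, A ∈ L ∧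
      (∀ i : Fin (k + 1), (i : ℕ) + 1 < k → A.mulVec (x i) = 0) ∧
      A.mulVec (x ⟨k - 1, by omega⟩) = z := by
    intro z
    obtain ⟨A, hAL, h1, h2⟩ := hEx 1 0 (Or.inl one_ne_zero) z
    exact ⟨A, hAL, h1, by simpa using h2⟩
  choose B hBL hBk hBz using hS0
  have hkey : ∀ A ∈ L, (∀ i : Fin (k + 1), (i : ℕ) + 1 < k → A.mulVec (x i) = 0) →
      A.mulVec (x (Fin.last k))
        = (B (A.mulVec (x ⟨k - 1, by omega⟩))).mulVec (x (Fin.last k)) := by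
    intro A hAL hA
    have hC : A - B (A.mulVec (x ⟨k - 1, by omega⟩)) ∈ L :=
      L.sub_mem hAL (hBL _)
    have hCk : ∀ i : Fin (k + 1), (i : ℕ) < k →
        (A - B (A.mulVec (x ⟨k - 1, by omega⟩))).mulVec (x i) = 0 := by
      intro i hi
      rw [Matrix.sub_mulVec]
      by_cases h : (i : ℕ) + 1 < k
      · rw [hA i h, hBk _ i h, sub_zero]
      · have hieq : i = ⟨k - 1, by omega⟩ := by ext; show (i : ℕ) = k - 1; omega
        rw [hieq, hBz, sub_self]
    have h0 := hkill _ hC hCk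
    rwa [Matrix.sub_mulVec, sub_eq_zero] at h0
  have hSadd : ∀ z w : Fin m → ℂ, (B (z + w)).mulVec (x (Fin.last k))
      = (B z).mulVec (x (Fin.last k)) + (B w).mulVec (x (Fin.last k)) := by
    intro z w
    have h2 := hkey (B z + B w) (L.add_mem (hBL z) (hBL w))
      (fun i hi => by rw [Matrix.add_mulVec, hBk z i hi, hBk w i hi, add_zero])
    rw [Matrix.add_mulVec, Matrix.add_mulVec, hBz, hBz] at h2
    exact h2.symm
  have hSsmul : ∀ (c : ℂ) (z : Fin m → ℂ), (B (c • z)).mulVec (x (Fin.last k))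
      = c • (B z).mulVec (x (Fin.last k)) := by
    intro c z
    have h2 := hkey (c • B z) (L.smul_mem c (hBL z))
      (fun i hi => by rw [Matrix.smul_mulVec, hBk z i hi, smul_zero])
    rw [Matrix.smul_mulVec, Matrix.smul_mulVec, hBz] at h2
    exact h2.symm
  set Slin : Module.End ℂ (Fin m → ℂ) :=
    { toFun := fun z => (B z).mulVec (x (Fin.last k)),
      map_add' := hSadd,
      map_smul' := fun c z => hSsmul c z } with hSlin
  have hSlin_apply : ∀ z, Slin z = (B z).mulVec (x (Fin.last k)) := fun z => rfl
  have hkey2 : ∀ a b : ℂ, a ≠ 0 ∨ b ≠ 0 → ∀ w : Fin m → ℂ,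
      ∃ z, a • z + b • Slin z = w := by
    intro a b hab w
    obtain ⟨A, hAL, h1, h2⟩ := hEx a b hab w
    refine ⟨A.mulVec (x ⟨k - 1, by omega⟩), ?_⟩
    rw [hSlin_apply, ← hkey A hAL h1]
    exact h2
  have hSsurj : Function.Surjective Slin := by
    intro w
    obtain ⟨z, hz⟩ := hkey2 0 1 (Or.inr one_ne_zero) w
    exact ⟨z, by simpa using hz⟩
  have hSinj : Function.Injective Slin :=
    LinearMap.injective_iff_surjective.mpr hSsurj
  haveI : Nonempty (Fin m) := ⟨⟨0, by omega⟩⟩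
  obtain ⟨μ, hμ⟩ := Module.End.exists_eigenvalue Slin
  obtain ⟨v, hv⟩ := hμ.exists_hasEigenvector
  have hvapp : Slin v = μ • v := hv.apply_eq_smul
  have hvne : v ≠ 0 := hv.2
  have hμ0 : μ ≠ 0 := by
    intro h
    apply hvne
    apply hSinj
    rw [hvapp, h, zero_smul, map_zero]
  set φ : Module.End ℂ (Fin m → ℂ) := LinearMap.id + (-μ⁻¹) • Slin with hφ
  have hφ_apply : ∀ z, φ z = z + (-μ⁻¹) • Slin z := fun z => rfl
  have hφsurj : Function.Surjective φ := by
    intro w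
    obtain ⟨z, hz⟩ := hkey2 1 (-μ⁻¹) (Or.inl one_ne_zero) w
    refine ⟨z, ?_⟩
    rw [hφ_apply]
    simpa using hz
  have hφinj : Function.Injective φ :=
    LinearMap.injective_iff_surjective.mpr hφsurj
  have hφv : φ v = 0 := by
    rw [hφ_apply, hvapp, smul_smul, neg_mul, inv_mul_cancel₀ hμ0, neg_smul,
      one_smul, add_neg_cancel]
  exact hvne (hφinj (hφv.trans (map_zero φ).symm))
end

section
/- If L ⊆ M_n(ℂ) is a transitive subspace spanned by its elements of rank at most r, then span L^{r+1} = M_n(ℂ), i.e. products of r+1 elements of L span all of M_n(ℂ). -/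
/-!
If the products of `r + 1` elements of `L` spanned a proper subspace, nondegeneracy of the trace
pairing would give `B ≠ 0` with `tr (B D) = 0` for all `D ∈ L ^ (r + 1)`. Call `C` an annihilator
of `L ^ k` if `tr (C D) = 0` on `L ^ k`; since `tr (A C D) = tr (C (D A))`, left multiplication by
`A ∈ L` turns an annihilator of `L ^ (k + 1)` into one of `L ^ k`.

An annihilator of `L ^ k` of rank at most `k` vanishes. For `k = 1` write `C = y xᵀ`, so that
`tr (C A) = xᵀ (A y)` with `A y` arbitrary. For `C ≠ 0` of rank `k ≥ 2`, it suffices to find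
`A ∈ L` with `A C ≠ 0` and `rank (A C) < k`, i.e. `A` nonzero on the range of `C` but not injective
there. Take independent `v₀, v₁` in that range: either some `A ∈ L` kills `v₀` but not `v₁`, or,
by transitivity, `A v₀ ↦ A v₁` is a well-defined endomorphism; then for an eigenvector `z` of it,
with eigenvalue `μ`, any `A ∈ L` with `A v₀ = z` kills `v₁ - μ v₀`.

Applied to `A B` with `A ∈ L` of rank at most `r`, this gives `A B = 0` on a spanning set, hence
on all of `L`, and transitivity forces `B = 0`.
-/

open Matrix
open scoped Pointwise

theorem Set.setOf_list_prod_eq_pow {M : Type*} [Monoid M] (s : Set M) (k : ℕ) :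
    {x | ∃ l : List M, l.length = k ∧ (∀ a ∈ l, a ∈ s) ∧ x = l.prod} = s ^ k := by
  induction k with
  | zero => ext x; simp
  | succ k ih =>
    ext x
    rw [pow_succ', Set.mem_mul, ← ih]
    constructor
    · rintro ⟨_ | ⟨a, l⟩, hl, hs, rfl⟩
      · simp at hl
      · exact ⟨a, hs a (by simp), l.prod,
          ⟨l, by simpa using hl, fun b hb => hs b (by simp [hb]), rfl⟩, rfl⟩
    · rintro ⟨a, ha, _, ⟨l, hl, hs, rfl⟩, rfl⟩
      exact ⟨a :: l, by simp [hl], by simpa [ha] using hs, rfl⟩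

theorem Submodule.span_setOf_list_prod_eq_pow {R A : Type*} [CommSemiring R] [Semiring A]
    [Algebra R A] (S : Submodule R A) (k : ℕ) :
    span R {x | ∃ l : List A, l.length = k ∧ (∀ a ∈ l, a ∈ S) ∧ x = l.prod} = S ^ k := by
  rw [pow_eq_span_pow_set, ← Set.setOf_list_prod_eq_pow]
  rfl

namespace Matrix

section Rank

variable {K : Type*} [Field K] {l m n : Type*} [Fintype n]

theorem rank_eq_zero_iff {C : Matrix m n K} : C.rank = 0 ↔ C = 0 := by
  classical
  rw [rank, Submodule.finrank_eq_zero, LinearMap.range_eq_bot]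
  constructor
  · intro h
    ext i j
    simpa using congrFun (LinearMap.congr_fun h (Pi.single j 1)) i
  · rintro rfl
    ext
    simp

theorem exists_eq_vecMulVec_of_rank_le_one {C : Matrix m n K} (hC : C.rank ≤ 1) :
    ∃ y x, C = vecMulVec y x := by
  classical
  obtain ⟨y, hy⟩ := finrank_le_one_iff.mp hC
  choose x hx using fun j => hy ⟨C *ᵥ Pi.single j 1, LinearMap.mem_range_self C.mulVecLin _⟩
  refine ⟨y, x, ?_⟩
  ext i j
  simpa [vecMulVec_apply, mul_comm] using (congrFun (congrArg Subtype.val (hx j)) i).symm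

theorem rank_mul_lt_of_mulVec_eq_zero [Fintype m] {A : Matrix l m K} {C : Matrix m n K}
    {w : m → K} (hw : w ∈ LinearMap.range C.mulVecLin) (hw0 : w ≠ 0) (hAw : A *ᵥ w = 0) :
    (A * C).rank < C.rank := by
  have hker : LinearMap.ker (A.mulVecLin.domRestrict (LinearMap.range C.mulVecLin)) ≠ ⊥ :=
    (Submodule.ne_bot_iff _).mpr ⟨⟨w, hw⟩, hAw, fun h => hw0 (congrArg Subtype.val h)⟩
  have hnullity :=
    (A.mulVecLin.domRestrict (LinearMap.range C.mulVecLin)).finrank_range_add_finrank_ker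
  rw [LinearMap.range_domRestrict, ← LinearMap.range_comp, ← mulVecLin_mul] at hnullity
  have := Submodule.finrank_eq_zero.not.mpr hker
  rw [rank, rank]
  omega

end Rank

variable {K ι : Type*} [Field K] [Fintype ι]

theorem exists_ne_zero_forall_trace_mul_eq_zero {W : Submodule K (Matrix ι ι K)} (hW : W ≠ ⊤) :
    ∃ B ≠ 0, ∀ D ∈ W, (B * D).trace = 0 := by
  classical
  obtain ⟨φ, hφ0, hφW⟩ := Submodule.exists_dual_map_eq_bot_of_lt_top hW.lt_top inferInstance
  let tracePairing := (LinearMap.mul K (Matrix ι ι K)).compr₂ (traceLinearMap ι K K)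
  have hinj : Function.Injective tracePairing := by
    rw [← LinearMap.ker_eq_bot, eq_bot_iff]
    intro B hB
    ext i j
    simpa [tracePairing, trace_mul_single] using LinearMap.congr_fun hB (single j i 1)
  obtain ⟨B, rfl⟩ := (LinearMap.injective_iff_surjective_of_finrank_eq_finrank
    Subspace.dual_finrank_eq.symm).mp hinj φ
  refine ⟨B, fun h => hφ0 (by simp [h]), fun D hD => ?_⟩
  simpa [tracePairing] using LinearMap.le_ker_iff_map.mpr hφW hD

theorem trace_mul_mul_eq_zero_of_forall_mem_pow_succ [DecidableEq ι]
    {L : Submodule K (Matrix ι ι K)} {k : ℕ} {A C : Matrix ι ι K}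
    (hC : ∀ D ∈ L ^ (k + 1), (C * D).trace = 0) (hA : A ∈ L) :
    ∀ D ∈ L ^ k, (A * C * D).trace = 0 := by
  intro D hD
  rw [Matrix.mul_assoc, trace_mul_comm, Matrix.mul_assoc]
  exact hC _ (pow_succ L k ▸ Submodule.mul_mem_mul hD hA)

def IsTransitive (L : Submodule K (Matrix ι ι K)) : Prop :=
  ∀ x : ι → K, x ≠ 0 → ∀ y : ι → K, ∃ A ∈ L, A *ᵥ x = y

namespace IsTransitive

variable {L : Submodule K (Matrix ι ι K)} (hL : IsTransitive L)
include hL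

theorem exists_mul_ne_zero {C : Matrix ι ι K} (hC : C ≠ 0) : ∃ A ∈ L, A * C ≠ 0 := by
  classical
  obtain ⟨u, hu⟩ : ∃ u, C *ᵥ u ≠ 0 := by
    by_contra! h
    exact hC (ext_of_mulVec_single fun j => by rw [h, zero_mulVec])
  obtain ⟨A, hA, hAu⟩ := hL _ hu (C *ᵥ u)
  exact ⟨A, hA, fun h => hu (by rw [← hAu, mulVec_mulVec, h, zero_mulVec])⟩

theorem eq_zero_of_rank_le_one {C : Matrix ι ι K} (hC : C.rank ≤ 1)
    (h : ∀ A ∈ L, (C * A).trace = 0) : C = 0 := by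
  classical
  obtain ⟨y, x, rfl⟩ := exists_eq_vecMulVec_of_rank_le_one hC
  by_cases hy : y = 0
  · simp [hy]
  suffices x = 0 by simp [this]
  funext j
  obtain ⟨A, hA, hAy⟩ := hL y hy (Pi.single j 1)
  simpa [trace_mul_comm, mul_vecMulVec, trace_vecMulVec, hAy] using h A hA

theorem exists_mulVec_ne_zero_and_mulVec_eq_zero [IsAlgClosed K] {V : Submodule K (ι → K)}
    (hV : 2 ≤ Module.finrank K V) :
    ∃ A ∈ L, (∃ v ∈ V, A *ᵥ v ≠ 0) ∧ ∃ w ∈ V, w ≠ 0 ∧ A *ᵥ w = 0 := by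
  obtain ⟨v₀, hv₀⟩ := Module.finrank_pos_iff_exists_ne_zero.mp (by omega : 0 < Module.finrank K V)
  obtain ⟨v₁, hv⟩ := exists_linearIndependent_pair_of_one_lt_finrank hV hv₀
  have hv₀' : (v₀ : ι → K) ≠ 0 := by simpa using hv₀
  by_cases hsplit : ∃ A ∈ L, A *ᵥ v₀ = 0 ∧ A *ᵥ v₁ ≠ 0
  · obtain ⟨A, hA, h₀, h₁⟩ := hsplit
    exact ⟨A, hA, ⟨v₁, v₁.2, h₁⟩, v₀, v₀.2, hv₀', h₀⟩
  push Not at hsplit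
  obtain ⟨F, hF⟩ : ∃ F : Module.End K (ι → K), ∀ A ∈ L, F (A *ᵥ v₀) = A *ᵥ v₁ := by
    let ev : (ι → K) → L →ₗ[K] ι → K := fun v => (mulVecBilin K K).flip v ∘ₗ L.subtype
    obtain ⟨s, hs⟩ := (ev v₀).exists_rightInverse_of_surjective
      (LinearMap.range_eq_top.mpr fun y => let ⟨A, hA, hAy⟩ := hL _ hv₀' y; ⟨⟨A, hA⟩, hAy⟩)
    refine ⟨ev v₁ ∘ₗ s, fun A hA => ?_⟩
    have := hsplit _ (s (A *ᵥ v₀) - ⟨A, hA⟩).2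
      (by simpa [ev, sub_mulVec, sub_eq_zero] using LinearMap.congr_fun hs (A *ᵥ v₀))
    simpa [ev, sub_mulVec, sub_eq_zero] using this
  have : Nontrivial (ι → K) := ⟨⟨_, _, hv₀'⟩⟩
  obtain ⟨μ, hμ⟩ := F.exists_eigenvalue
  obtain ⟨z, hz⟩ := hμ.exists_hasEigenvector
  obtain ⟨A, hA, hAz⟩ := hL _ hv₀' z
  refine ⟨A, hA, ⟨v₀, v₀.2, hAz ▸ hz.2⟩, v₁ - μ • v₀, sub_mem v₁.2 (V.smul_mem μ v₀.2), ?_, ?_⟩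
  · intro hw
    refine one_ne_zero (hv.eq_zero_of_pair (s := -μ) (t := 1) (Subtype.ext ?_)).2
    simpa [neg_add_eq_sub] using hw
  · rw [mulVec_sub, mulVec_smul, ← hF A hA, hAz, hz.apply_eq_smul, sub_self]

theorem exists_mul_ne_zero_and_rank_mul_lt [IsAlgClosed K] {C : Matrix ι ι K}
    (hC : 2 ≤ C.rank) : ∃ A ∈ L, A * C ≠ 0 ∧ (A * C).rank < C.rank := by
  obtain ⟨A, hA, ⟨_, ⟨u, rfl⟩, hu⟩, w, hw, hw0, hAw⟩ :=
    hL.exists_mulVec_ne_zero_and_mulVec_eq_zero hC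
  refine ⟨A, hA, fun h => hu ?_, rank_mul_lt_of_mulVec_eq_zero hw hw0 hAw⟩
  simp [mulVec_mulVec, h]

theorem eq_zero_of_rank_le_of_trace_mul_pow_eq_zero [IsAlgClosed K] [DecidableEq ι] :
    ∀ (k : ℕ) (C : Matrix ι ι K), C.rank ≤ k → (∀ D ∈ L ^ k, (C * D).trace = 0) → C = 0
  | 0, _, hC, _ => rank_eq_zero_iff.mp (Nat.le_zero.mp hC)
  | 1, _, hC, h => hL.eq_zero_of_rank_le_one hC (by simpa using h)
  | k + 2, C, hC, h => by
    by_contra hC0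
    obtain ⟨A, hA, hAC, hrank⟩ : ∃ A ∈ L, A * C ≠ 0 ∧ (A * C).rank ≤ k + 1 := by
      rcases hC.lt_or_eq with hlt | heq
      · obtain ⟨A, hA, hAC⟩ := hL.exists_mul_ne_zero hC0
        exact ⟨A, hA, hAC, (rank_mul_le_right A C).trans (by omega)⟩
      · obtain ⟨A, hA, hAC, hlt⟩ := hL.exists_mul_ne_zero_and_rank_mul_lt (C := C) (by omega)
        exact ⟨A, hA, hAC, by omega⟩
    exact hAC (eq_zero_of_rank_le_of_trace_mul_pow_eq_zero (k + 1) (A * C) hrank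
      (trace_mul_mul_eq_zero_of_forall_mem_pow_succ h hA))

end IsTransitive

end Matrix

/-- If `L ⊆ M_n(ℂ)` is a transitive subspace spanned by its elements of rank at
most `r`, then products of `r + 1` elements of `L` span `M_n(ℂ)`. -/
theorem span_pow_succ_eq_top (n r : ℕ)
    (L : Submodule ℂ (Matrix (Fin n) (Fin n) ℂ))
    (htrans : ∀ x : Fin n → ℂ, x ≠ 0 → ∀ y : Fin n → ℂ, ∃ A ∈ L, A.mulVec x = y)
    (hspan : L = Submodule.span ℂ {A : Matrix (Fin n) (Fin n) ℂ | A ∈ L ∧ A.rank ≤ r}) :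
    Submodule.span ℂ {C : Matrix (Fin n) (Fin n) ℂ |
        ∃ lst : List (Matrix (Fin n) (Fin n) ℂ),
          lst.length = r + 1 ∧ (∀ A ∈ lst, A ∈ L) ∧ C = lst.prod} = ⊤ := by
  have hL : IsTransitive L := htrans
  rw [Submodule.span_setOf_list_prod_eq_pow]
  by_contra hne
  obtain ⟨B, hB0, hB⟩ := exists_ne_zero_forall_trace_mul_eq_zero hne
  have hLB : L ≤ LinearMap.ker (LinearMap.mulRight ℂ B) := by
    rw [hspan, Submodule.span_le]
    rintro A ⟨hA, hAr⟩
    exact hL.eq_zero_of_rank_le_of_trace_mul_pow_eq_zero r (A * B)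
      ((rank_mul_le_left A B).trans hAr) (trace_mul_mul_eq_zero_of_forall_mem_pow_succ hB hA)
  obtain ⟨A, hA, hAB⟩ := hL.exists_mul_ne_zero hB0
  exact hAB (hLB hA)
end

section
/- If L is a linear subspace of M_n(ℂ) all of whose elements are singular (non-invertible) matrices, then L is not transitive. Equivalently, every transitive subspace of M_n(ℂ) contains an invertible matrix. -/
/-!
Let `A ∈ L` have maximal rank `r`. If `A x = 0` and `B ∈ L`, then `B x ∈ range A`: otherwise lift
a basis of `range A` to vectors `v i`; the `r + 1` vectors `(A + t B) v i` and
`(A + t B) (t⁻¹ x) = B x` lie in `range (A + t B)` and are a small perturbation of the linearly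
independent family `(A v i, B x)`, so they stay independent for some small `t ≠ 0`, and
`A + t B ∈ L` has rank `> r`. A singular `A` has a nonzero `x` in its kernel and some `y` outside
its range, so no `B ∈ L` maps `x` to `y`.
-/

open Filter Topology Module LinearMap Matrix

section NormedField

variable {𝕜 E : Type*} [NontriviallyNormedField 𝕜] [CompleteSpace 𝕜]
  [NormedAddCommGroup E] [NormedSpace 𝕜 E]

theorem LinearIndependent.eventually_add_smul {ι : Type*} [Finite ι] {u : ι → E}
    (hu : LinearIndependent 𝕜 u) (v : ι → E) :
    ∀ᶠ t in 𝓝 (0 : 𝕜), LinearIndependent 𝕜 (u + t • v) := by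
  have hcont : Tendsto (fun t : 𝕜 => u + t • v) (𝓝 0) (𝓝 (u + (0 : 𝕜) • v)) :=
    tendsto_const_nhds.add (tendsto_id.smul_const v)
  rw [zero_smul, add_zero] at hcont
  exact hcont.eventually hu.eventually

theorem LinearIndependent.exists_ne_zero_add_smul {ι : Type*} [Finite ι] {u : ι → E}
    (hu : LinearIndependent 𝕜 u) (v : ι → E) :
    ∃ t : 𝕜, t ≠ 0 ∧ LinearIndependent 𝕜 (u + t • v) :=
  (((hu.eventually_add_smul v).filter_mono nhdsWithin_le_nhds).and
    (self_mem_nhdsWithin : ∀ᶠ t in 𝓝[≠] (0 : 𝕜), t ≠ 0)).exists.imp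
    fun _ h => ⟨h.2, h.1⟩

variable [FiniteDimensional 𝕜 E] {V : Type*} [AddCommGroup V] [Module 𝕜 V]

theorem LinearMap.exists_finrank_range_lt_finrank_range_add_smul {f g : V →ₗ[𝕜] E} {x : V}
    (hx : f x = 0) (hgx : g x ∉ range f) :
    ∃ t : 𝕜, finrank 𝕜 (range f) < finrank 𝕜 (range (f + t • g)) := by
  set r := finrank 𝕜 (range f)
  let b := Module.finBasis 𝕜 (range f)
  choose v hv using fun i => (b i).2
  have hb : LinearIndependent 𝕜 fun i => (b i : E) :=
    b.linearIndependent.map' _ (Submodule.ker_subtype _)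
  have hspan : Submodule.span 𝕜 (Set.range fun i => (b i : E)) ≤ range f :=
    Submodule.span_le.2 <| Set.range_subset_iff.2 fun i => (b i).2
  let u : Fin (r + 1) → E := Fin.snoc (fun i => (b i : E)) (g x)
  let d : Fin (r + 1) → E := Fin.snoc (fun i => g (v i)) 0
  have hu : LinearIndependent 𝕜 u := linearIndependent_finSnoc.2 ⟨hb, fun h => hgx (hspan h)⟩
  obtain ⟨t, ht, hind⟩ := hu.exists_ne_zero_add_smul d
  have hmem : ∀ j, (u + t • d) j ∈ range (f + t • g) := by
    refine Fin.lastCases ⟨t⁻¹ • x, ?_⟩ fun i => ⟨v i, ?_⟩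
    · simp [u, d, hx, ht]
    · simp [u, d, hv]
  refine ⟨t, ?_⟩
  have hind' : LinearIndependent 𝕜 fun j => (⟨_, hmem j⟩ : range (f + t • g)) :=
    LinearIndependent.of_comp (range (f + t • g)).subtype hind
  simpa using hind'.fintype_card_le_finrank

theorem Matrix.mulVec_mem_range_of_forall_rank_le {m n : Type*} [Fintype m] [Fintype n]
    {L : Submodule 𝕜 (Matrix m n 𝕜)} {A B : Matrix m n 𝕜} (hA : A ∈ L)
    (hmax : ∀ C ∈ L, C.rank ≤ A.rank) (hB : B ∈ L) {x : n → 𝕜} (hx : A *ᵥ x = 0) :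
    B *ᵥ x ∈ range A.mulVecLin := by
  by_contra hBx
  obtain ⟨t, ht⟩ :=
    A.mulVecLin.exists_finrank_range_lt_finrank_range_add_smul (g := B.mulVecLin) hx hBx
  have hle := hmax (A + t • B) (L.add_mem hA (L.smul_mem t hB))
  have hlin : (A + t • B).mulVecLin = A.mulVecLin + t • B.mulVecLin :=
    LinearMap.ext fun v => by simp
  rw [rank, rank, hlin] at hle
  omega

end NormedField

theorem Submodule.exists_forall_rank_le {K m n : Type*} [Field K] [Fintype n]
    (L : Submodule K (Matrix m n K)) : ∃ A ∈ L, ∀ B ∈ L, B.rank ≤ A.rank := by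
  have hbdd : BddAbove (Matrix.rank '' (L : Set (Matrix m n K))) :=
    ⟨Fintype.card n, Set.forall_mem_image.2 fun B _ => B.rank_le_card_width⟩
  obtain ⟨A, hA, hrank⟩ := Nat.sSup_mem ⟨_, Set.mem_image_of_mem _ L.zero_mem⟩ hbdd
  exact ⟨A, hA, fun B hB => hrank ▸ le_csSup hbdd (Set.mem_image_of_mem _ hB)⟩

/-- A subspace of `M_n(ℂ)` consisting entirely of singular matrices is not
transitive; equivalently, every transitive subspace contains an invertible. -/
theorem singular_subspace_not_transitive (n : ℕ)
    (L : Submodule ℂ (Matrix (Fin n) (Fin n) ℂ))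
    (hsing : ∀ A ∈ L, A.det = 0) :
    ¬ (∀ x : Fin n → ℂ, x ≠ 0 → ∀ y : Fin n → ℂ, ∃ A ∈ L, A.mulVec x = y) := by
  intro htrans
  obtain ⟨A, hA, hmax⟩ := L.exists_forall_rank_le
  obtain ⟨x, hx0, hAx⟩ := exists_mulVec_eq_zero_iff.2 (hsing A hA)
  have hA_not_surj : ¬ Function.Surjective A.mulVec := by
    rw [mulVec_surjective_iff_isUnit, Matrix.isUnit_iff_isUnit_det, hsing A hA]
    exact not_isUnit_zero
  obtain ⟨y, hy⟩ := not_forall.1 hA_not_surj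
  obtain ⟨B, hB, rfl⟩ := htrans x hx0 y
  exact hy (mulVec_mem_range_of_forall_rank_le hA hmax hB hAx)
end

section
/- There exists a linear subspace L of M_4(ℂ) such that both L and its pre-annihilator L_⊥ (under the trace pairing) are transitive; equivalently, neither L nor L_⊥ contains a non-zero matrix of rank one. Concretely, one may take L = { [[A, Φ(B)],[B, A]] : A, B ∈ M_2(ℂ) } where Φ([[a,b],[c,d]]) = [[d,2c],[b,a]]. -/
open Matrix

/-- The pre-annihilator of `L` under the trace pairing `⟨A, T⟩ = Tr (A * T)`. -/
noncomputable def preAnn {α β : Type*} [Fintype α] [Fintype β]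
    (L : Submodule ℂ (Matrix α β ℂ)) : Submodule ℂ (Matrix β α ℂ) where
  carrier := {T | ∀ A ∈ L, Matrix.trace (A * T) = 0}
  add_mem' := by
    intro T S hT hS A hA
    simp [Matrix.mul_add, hT A hA, hS A hA]
  zero_mem' := by
    intro A hA
    simp
  smul_mem' := by
    intro c T hT A hA
    simp [Matrix.mul_smul, hT A hA]

/-- The map `Φ([[a,b],[c,d]]) = [[d,2c],[b,a]]`. -/
noncomputable def phi (X : Matrix (Fin 2) (Fin 2) ℂ) : Matrix (Fin 2) (Fin 2) ℂ :=
  !![X 1 1, 2 * X 1 0; X 0 1, X 0 0]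

/-!
A rank-one `4 × 4` matrix is `(a; c) (b; d)ᵀ` with `a b c d : Fin 2 → ℂ`, and it has the shape
`[[A, ε Φ(B)], [B, ε A]]` iff `c dᵀ = ε a bᵀ` and `a dᵀ = ε Φ(c bᵀ)`. If `a bᵀ ≠ 0`, the first
equation forces `c ∥ a` and `d ∥ b`, and the second then makes `a bᵀ` an eigenvector of `Φ` of
rank one. But `Φ` swaps the diagonal entries and acts on the off-diagonal ones by
`[[0, 2], [1, 0]]`, so its eigenvectors (for `±1`, `±√2`) all have rank two. As `Φ` is
self-adjoint for the trace pairing, the pre-annihilator of the space with `ε = 1` is the space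
with `ε = -1` and vice versa, so neither `L` nor `L_⊥` contains a rank-one matrix. Transitivity
follows: if `{A x | A ∈ L}` were a proper subspace it would be killed by some `v ≠ 0`, and `x vᵀ`
would be a rank-one element of `L_⊥`.
-/

section RankOne

variable {K m n : Type*} [Field K]

def RankOneFree (L : Submodule K (Matrix m n K)) : Prop :=
  ∀ u v, vecMulVec u v ∈ L → u = 0 ∨ v = 0

theorem Matrix.exists_eq_vecMulVec_of_rank_eq_one [Fintype n] {T : Matrix m n K}
    (h : T.rank = 1) : ∃ u v, T = vecMulVec u v := by
  classical
  obtain ⟨w, -, hw⟩ := finrank_eq_one_iff'.mp h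
  choose c hc using fun j : n => hw ⟨T *ᵥ Pi.single j 1, LinearMap.mem_range_self _ _⟩
  refine ⟨w, c, Matrix.ext fun i j => ?_⟩
  have := congrArg (fun z : LinearMap.range T.mulVecLin => (z : m → K) i) (hc j)
  simp only [SetLike.val_smul, Pi.smul_apply, smul_eq_mul, mulVec_single_one] at this
  rw [vecMulVec_apply, mul_comm, this, col_apply]

theorem RankOneFree.rank_ne_one [Fintype n] {L : Submodule K (Matrix m n K)}
    (hL : RankOneFree L) {T : Matrix m n K} (hT : T ∈ L) : T.rank ≠ 1 := by
  intro h
  obtain ⟨u, v, rfl⟩ := exists_eq_vecMulVec_of_rank_eq_one h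
  have hzero : vecMulVec u v = 0 := by
    ext i j
    rcases hL u v hT with rfl | rfl <;> simp [vecMulVec_apply]
  simp [hzero, rank_zero] at h

theorem Matrix.exists_eq_smul_of_vecMulVec_eq {a c : m → K} {b d : n → K}
    (h : vecMulVec a b = vecMulVec c d) (hd : d ≠ 0) : ∃ t : K, c = t • a := by
  obtain ⟨j, hj⟩ : ∃ j, d j ≠ 0 := Function.ne_iff.mp hd
  refine ⟨b j / d j, funext fun i => ?_⟩
  have := congrFun (congrFun h i) j
  simp only [vecMulVec_apply, Pi.smul_apply, smul_eq_mul] at this ⊢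
  field_simp
  linear_combination this.symm

end RankOne

theorem kTrans_one_of_rankOneFree_preAnn {α β : Type*} [Fintype α] [Fintype β]
    {L : Submodule ℂ (Matrix α β ℂ)} (hL : RankOneFree (preAnn L)) : kTrans L 1 := by
  classical
  intro x hx y
  let evalAt : Matrix α β ℂ →ₗ[ℂ] α → ℂ := LinearMap.applyₗ (x 0) ∘ₗ Matrix.toLin'.toLinearMap
  suffices hsurj : L.map evalAt = ⊤ by
    obtain ⟨A, hA, hAx⟩ := (Submodule.mem_map).mp (hsurj ▸ Submodule.mem_top : y 0 ∈ L.map evalAt)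
    exact ⟨A, hA, fun i => Subsingleton.elim 0 i ▸ hAx⟩
  by_contra hne
  obtain ⟨φ, hφ, hφL⟩ := Submodule.exists_dual_map_eq_bot_of_lt_top (lt_top_iff_ne_top.mpr hne)
    inferInstance
  set v := (dotProductEquiv ℂ α).symm φ
  have hv : vecMulVec (x 0) v ∈ preAnn L := fun A hA => by
    have hφA : φ (A *ᵥ x 0) = 0 :=
      (Submodule.eq_bot_iff _).mp hφL _
        (Submodule.mem_map_of_mem (Submodule.mem_map_of_mem (f := evalAt) hA))
    calc trace (A * vecMulVec (x 0) v) = dotProductEquiv ℂ α v (A *ᵥ x 0) := by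
          rw [mul_vecMulVec, trace_vecMulVec, dotProduct_comm]; rfl
      _ = 0 := by rw [LinearEquiv.apply_symm_apply, hφA]
  rcases hL _ _ hv with h | h
  · exact hx.ne_zero 0 h
  · exact hφ (by simpa [v] using congrArg (dotProductEquiv ℂ α) h)

theorem Matrix.trace_reindex_fromBlocks_mul {K n m p : Type*} [NonUnitalNonAssocSemiring K]
    [Fintype n] [Fintype m] [Fintype p] (e : n ⊕ m ≃ p) (A B C D X Y Z W : Matrix _ _ K) :
    trace (reindex e e (fromBlocks A B C D : Matrix (n ⊕ m) (n ⊕ m) K) *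
        reindex e e (fromBlocks X Y Z W)) =
      trace (A * X) + trace (B * Z) + trace (C * Y) + trace (D * W) := by
  rw [reindex_apply, reindex_apply, submatrix_mul_equiv, fromBlocks_multiply]
  simp only [trace, diag_apply, submatrix_apply]
  rw [e.symm.sum_comp (fun i => fromBlocks _ _ _ _ i i)]
  simp only [Fintype.sum_sum_type, fromBlocks_apply₁₁, fromBlocks_apply₂₂, add_apply,
    Finset.sum_add_distrib]
  abel

theorem Matrix.vecMulVec_eq_reindex_fromBlocks {K n m p : Type*} [Mul K]
    (e : n ⊕ m ≃ p) (u v : p → K) :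
    vecMulVec u v = reindex e e (fromBlocks
      (vecMulVec (u ∘ e ∘ .inl) (v ∘ e ∘ .inl)) (vecMulVec (u ∘ e ∘ .inl) (v ∘ e ∘ .inr))
      (vecMulVec (u ∘ e ∘ .inr) (v ∘ e ∘ .inl)) (vecMulVec (u ∘ e ∘ .inr) (v ∘ e ∘ .inr))) := by
  ext i j
  obtain ⟨i, rfl⟩ := e.surjective i
  obtain ⟨j, rfl⟩ := e.surjective j
  rcases i with i | i <;> rcases j with j | j <;> simp [vecMulVec_apply]

theorem Matrix.eq_zero_or_eq_zero_of_vecMulVec_blocks {K n : Type*} [Field K]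
    (Φ : Matrix n n K →ₗ[K] Matrix n n K)
    (hΦ : ∀ (κ : K) (a b : n → K), Φ (vecMulVec a b) = κ • vecMulVec a b → a = 0 ∨ b = 0)
    {ε : K} (hε : ε ≠ 0) {a b c d : n → K}
    (h₁ : vecMulVec c d = ε • vecMulVec a b) (h₂ : vecMulVec a d = ε • Φ (vecMulVec c b)) :
    (a = 0 ∧ c = 0) ∨ (b = 0 ∧ d = 0) := by
  by_cases hab : vecMulVec a b = 0
  · rw [hab, smul_zero, vecMulVec_eq_zero] at h₁
    rw [vecMulVec_eq_zero] at hab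
    rcases hab with rfl | rfl <;> rcases h₁ with rfl | rfl
    · exact Or.inl ⟨rfl, rfl⟩
    · have hcb : Φ (vecMulVec c b) = (0 : K) • vecMulVec c b := by
        rw [zero_smul]
        simpa [hε] using h₂.symm
      rcases hΦ 0 c b hcb with rfl | rfl
      · exact Or.inl ⟨rfl, rfl⟩
      · exact Or.inr ⟨rfl, rfl⟩
    · rw [zero_vecMulVec, map_zero, smul_zero, vecMulVec_eq_zero] at h₂
      rcases h₂ with rfl | rfl
      · exact Or.inl ⟨rfl, rfl⟩
      · exact Or.inr ⟨rfl, rfl⟩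
    · exact Or.inr ⟨rfl, rfl⟩
  · exfalso
    have hcd : vecMulVec c d ≠ 0 := h₁ ▸ smul_ne_zero hε hab
    obtain ⟨ha, hb⟩ : a ≠ 0 ∧ b ≠ 0 := by simpa [not_or] using hab
    obtain ⟨hc, hd⟩ : c ≠ 0 ∧ d ≠ 0 := by simpa [not_or] using hcd
    rw [← vecMulVec_smul] at h₁
    obtain ⟨s, rfl⟩ := exists_eq_smul_of_vecMulVec_eq h₁.symm hd
    obtain ⟨t, rfl⟩ := exists_eq_smul_of_vecMulVec_eq
      (by simpa only [transpose_vecMulVec] using congrArg transpose h₁.symm) hc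
    have hs : s ≠ 0 := by rintro rfl; simp at hc
    have heig : Φ (vecMulVec a b) = (t / s) • vecMulVec a b := by
      simp only [vecMulVec_smul, smul_vecMulVec, map_smul, smul_smul] at h₂
      calc Φ (vecMulVec a b) = (ε * s)⁻¹ • ((ε * s) • Φ (vecMulVec a b)) := by
            rw [smul_smul, inv_mul_cancel₀ (mul_ne_zero hε hs), one_smul]
        _ = (t / s) • vecMulVec a b := by
            rw [← h₂, smul_smul]
            congr 1
            field_simp
    rcases hΦ _ a b heig with h | h <;> contradiction

noncomputable def phiₗ : Matrix (Fin 2) (Fin 2) ℂ →ₗ[ℂ] Matrix (Fin 2) (Fin 2) ℂ where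
  toFun := phi
  map_add' X Y := by ext i j; fin_cases i <;> fin_cases j <;> simp [phi, mul_add]
  map_smul' c X := by ext i j; fin_cases i <;> fin_cases j <;> simp [phi, mul_left_comm]

theorem phiₗ_apply (X : Matrix (Fin 2) (Fin 2) ℂ) : phiₗ X = phi X := rfl

theorem trace_phi_mul (X Y : Matrix (Fin 2) (Fin 2) ℂ) :
    trace (phi X * Y) = trace (X * phi Y) := by
  simp only [phi, trace_fin_two, mul_apply, Fin.sum_univ_two, of_apply, cons_val', cons_val_zero,
    cons_val_one, cons_val_fin_one]
  ring

theorem eq_zero_of_phi_eq_smul_of_det_eq_zero {X : Matrix (Fin 2) (Fin 2) ℂ} {κ : ℂ}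
    (hX : phi X = κ • X) (hdet : X.det = 0) : X = 0 := by
  have e₀₀ := congrFun (congrFun hX 0) 0
  have e₀₁ := congrFun (congrFun hX 0) 1
  have e₁₀ := congrFun (congrFun hX 1) 0
  have e₁₁ := congrFun (congrFun hX 1) 1
  simp only [phi, of_apply, cons_val', cons_val_zero, cons_val_one, cons_val_fin_one,
    Matrix.smul_apply, smul_eq_mul] at e₀₀ e₀₁ e₁₀ e₁₁
  rw [det_fin_two] at hdet
  -- `X 0 0 ≠ 0` forces `κ ^ 2 = 1`, which rules out the off-diagonal eigenvalues `±√2`; then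
  -- `det X = κ * X 0 0 ^ 2` cannot vanish.
  have h₀₀ : X 0 0 = 0 := by
    by_contra hne
    have hκ : κ ^ 2 = 1 := mul_right_cancel₀ hne (by linear_combination -κ * e₀₀ - e₁₁)
    have h₁₀ : X 1 0 = 0 := by linear_combination e₀₁ + κ * e₁₀ + X 1 0 * hκ
    refine hne (pow_eq_zero_iff two_ne_zero |>.mp ?_)
    linear_combination (-X 0 0 ^ 2) * hκ + κ * hdet - κ * X 0 0 * e₀₀ + κ * X 0 1 * h₁₀
  have h₁₀ : X 1 0 = 0 := pow_eq_zero_iff two_ne_zero |>.mp <| by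
    linear_combination (X 1 0 * e₀₁ + κ * X 1 1 * h₀₀ - κ * hdet) / 2
  ext i j
  fin_cases i <;> fin_cases j <;> simp [h₀₀, h₁₀, e₀₀, e₁₀]

theorem phi_vecMulVec_eq_smul (κ : ℂ) (a b : Fin 2 → ℂ)
    (h : phi (vecMulVec a b) = κ • vecMulVec a b) : a = 0 ∨ b = 0 :=
  vecMulVec_eq_zero.mp <| eq_zero_of_phi_eq_smul_of_det_eq_zero h <| by
    simp only [det_fin_two, vecMulVec_apply]; ring

noncomputable def blockMatrix (ε : ℂ) (A B : Matrix (Fin 2) (Fin 2) ℂ) : Matrix (Fin 4) (Fin 4) ℂ :=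
  reindex finSumFinEquiv finSumFinEquiv (fromBlocks A (ε • phi B) B (ε • A))

noncomputable def blockSpace (ε : ℂ) : Submodule ℂ (Matrix (Fin 4) (Fin 4) ℂ) where
  carrier := {T | ∃ A B, blockMatrix ε A B = T}
  add_mem' := by
    rintro _ _ ⟨A, B, rfl⟩ ⟨A', B', rfl⟩
    refine ⟨A + A', B + B', ?_⟩
    rw [blockMatrix, ← phiₗ_apply, map_add, smul_add, smul_add, ← fromBlocks_add]
    rfl
  zero_mem' := ⟨0, 0, by rw [blockMatrix, ← phiₗ_apply, map_zero, smul_zero, fromBlocks_zero]; rfl⟩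
  smul_mem' := by
    rintro c _ ⟨A, B, rfl⟩
    refine ⟨c • A, c • B, ?_⟩
    rw [blockMatrix, ← phiₗ_apply, map_smul, smul_comm ε c, smul_comm ε c, ← fromBlocks_smul]
    rfl

theorem trace_blockMatrix_mul (ε δ : ℂ) (A B X Z : Matrix (Fin 2) (Fin 2) ℂ) :
    trace (blockMatrix ε A B * blockMatrix δ X Z) =
      (1 + ε * δ) * trace (A * X) + (ε + δ) * trace (phi B * Z) := by
  simp only [blockMatrix, trace_reindex_fromBlocks_mul, Matrix.smul_mul, Matrix.mul_smul,
    trace_smul, smul_eq_mul, ← trace_phi_mul B Z]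
  ring

theorem preAnn_blockSpace {ε : ℂ} (hε : ε ^ 2 = 1) : preAnn (blockSpace ε) = blockSpace (-ε) := by
  refine le_antisymm (fun T hT => ?_) ?_
  · obtain ⟨X, Y, Z, W, rfl⟩ : ∃ X Y Z W : Matrix (Fin 2) (Fin 2) ℂ,
        reindex finSumFinEquiv finSumFinEquiv (fromBlocks X Y Z W) = T := by
      set M : Matrix (Fin 2 ⊕ Fin 2) (Fin 2 ⊕ Fin 2) ℂ :=
        (reindex finSumFinEquiv finSumFinEquiv).symm T
      exact ⟨M.toBlocks₁₁, M.toBlocks₁₂, M.toBlocks₂₁, M.toBlocks₂₂, by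
        rw [fromBlocks_toBlocks, Equiv.apply_symm_apply]⟩
    have hXW : X + ε • W = 0 := (ext_iff_trace_mul_left).mpr fun A => by
      have := hT _ ⟨A, 0, rfl⟩
      rw [blockMatrix, trace_reindex_fromBlocks_mul] at this
      simpa [mul_add, ← phiₗ_apply] using this
    have hYZ : Y + ε • phi Z = 0 := (ext_iff_trace_mul_left).mpr fun B => by
      have := hT _ ⟨0, B, rfl⟩
      rw [blockMatrix, trace_reindex_fromBlocks_mul] at this
      simpa [mul_add, trace_phi_mul, add_comm] using this
    have hY : Y = -ε • phi Z := by rw [neg_smul]; exact eq_neg_of_add_eq_zero_left hYZ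
    have hW : W = -ε • X := by
      rw [eq_neg_of_add_eq_zero_left hXW, smul_neg, neg_smul, neg_neg, smul_smul, ← sq, hε,
        one_smul]
    exact ⟨X, Z, by rw [blockMatrix, hY, hW]⟩
  · rintro _ ⟨X, Z, rfl⟩ _ ⟨A, B, rfl⟩
    rw [trace_blockMatrix_mul]
    linear_combination (-trace (A * X)) * hε

theorem rankOneFree_blockSpace {ε : ℂ} (hε : ε ≠ 0) : RankOneFree (blockSpace ε) := by
  rintro u v ⟨A, B, hAB⟩
  rw [blockMatrix] at hAB
  set e : Fin 2 ⊕ Fin 2 ≃ Fin 4 := finSumFinEquiv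
  rw [vecMulVec_eq_reindex_fromBlocks e, (reindex e e).injective.eq_iff, fromBlocks_inj] at hAB
  obtain ⟨rfl, h₂, rfl, h₁⟩ := hAB
  have eq_zero (w : Fin 4 → ℂ) (hl : w ∘ e ∘ .inl = 0) (hr : w ∘ e ∘ .inr = 0) : w = 0 := by
    funext i
    obtain ⟨i | i, rfl⟩ := e.surjective i
    exacts [congrFun hl i, congrFun hr i]
  rcases eq_zero_or_eq_zero_of_vecMulVec_blocks phiₗ phi_vecMulVec_eq_smul hε h₁.symm h₂.symm
    with ⟨ha, hc⟩ | ⟨hb, hd⟩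
  exacts [.inl (eq_zero u ha hc), .inr (eq_zero v hb hd)]

/-- There is a subspace `L` of `M_4(ℂ)` such that both `L` and its pre-annihilator
are transitive; concretely `L = { [[A, Φ(B)], [B, A]] : A, B ∈ M_2(ℂ) }` works.
Equivalently, neither `L` nor `L_⊥` contains a non-zero matrix of rank one. -/
theorem dually_transitive_in_M4 :
    ∃ L : Submodule ℂ (Matrix (Fin 4) (Fin 4) ℂ),
      L = Submodule.span ℂ {C : Matrix (Fin 4) (Fin 4) ℂ |
          ∃ A B : Matrix (Fin 2) (Fin 2) ℂ,
            C = Matrix.reindex finSumFinEquiv finSumFinEquiv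
                  (Matrix.fromBlocks A (phi B) B A)} ∧
      kTrans L 1 ∧ kTrans (preAnn L) 1 ∧
      (∀ T ∈ L, T ≠ 0 → T.rank ≠ 1) ∧
      (∀ T ∈ preAnn L, T ≠ 0 → T.rank ≠ 1) := by
  have hpre : preAnn (blockSpace 1) = blockSpace (-1) := preAnn_blockSpace (one_pow 2)
  have hpre' : preAnn (blockSpace (-1)) = blockSpace 1 := by
    simpa using preAnn_blockSpace (ε := -1) (by norm_num)
  have hfree : RankOneFree (blockSpace 1) := rankOneFree_blockSpace one_ne_zero
  have hfree' : RankOneFree (preAnn (blockSpace 1)) := hpre ▸ rankOneFree_blockSpace (by norm_num)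
  refine ⟨blockSpace 1, ?_, kTrans_one_of_rankOneFree_preAnn hfree',
    kTrans_one_of_rankOneFree_preAnn (by rwa [hpre, hpre']),
    fun T hT _ => hfree.rank_ne_one hT, fun T hT _ => hfree'.rank_ne_one hT⟩
  rw [← Submodule.span_eq (blockSpace 1)]
  congr
  ext C
  simp [blockSpace, blockMatrix, eq_comm]
end
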